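/- Sublinear modulus for gradients against the Lagrangian (Proposition 4.15(c)): Let E be a d-dimensional convex polyhedron, {H_J} a generating set of Hamiltonians admitting a good containment function Υ, and L(x,v) = sup_{p∈ℝ^d}(⟨p,v⟩ − H_†(x,p)). Then for every bounded twice continuously differentiable f : E → ℝ and every compact K ⊆ E there exists a right-continuous nondecreasing function ψ_{f,K} : [0,∞) → [0,∞) with lim_{r→∞} ψ_{f,K}(r)/r = 0 such that |⟨∇f(x), v⟩| ≤ ψ_{f,K}(L(x,v)) for all x ∈ K and all v ∈ ℝ^d. -/

import Mathlib

open Filter Set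
open scoped ENNReal

noncomputable section

/-- `ℝ^d` with the Euclidean structure. -/
abbrev Euc (d : ℕ) := EuclideanSpace ℝ (Fin d)

/-- The `d`-dimensional convex polyhedron
`E = (⋂ᵢ B_{xᵢ,vᵢ}) ∩ (⋂ⱼ B°_{yⱼ,wⱼ})` determined by the data `xs, vs, ys, ws`. -/
def polyE {d k l : ℕ} (xs vs : Fin k → Euc d) (ys ws : Fin l → Euc d) : Set (Euc d) :=
  {z | (∀ i, 0 ≤ (inner ℝ (z - xs i) (vs i) : ℝ)) ∧ ∀ j, 0 < (inner ℝ (z - ys j) (ws j) : ℝ)}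

/-- `E_J = E ∩ ⋂_{i∈J} (B_{xᵢ,vᵢ} \ B°_{xᵢ,vᵢ})`. -/
def polyEJ {d k l : ℕ} (xs vs : Fin k → Euc d) (ys ws : Fin l → Euc d)
    (J : Finset (Fin k)) : Set (Euc d) :=
  {z ∈ polyE xs vs ys ws | ∀ i ∈ J, (inner ℝ (z - xs i) (vs i) : ℝ) = 0}

/-- `Γ_J = ⋂_{i∈J} B_{0,vᵢ}` (with `Γ_∅ = ℝ^d`). -/
def GammaJ {d k : ℕ} (vs : Fin k → Euc d) (J : Finset (Fin k)) : Set (Euc d) :=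
  {w | ∀ i ∈ J, 0 ≤ (inner ℝ (w) (vs i) : ℝ)}

/-- The defining property of a `d`-dimensional convex polyhedron: `E` is contained in
the closure of its interior. -/
def IsPolyhedron {d k l : ℕ} (xs vs : Fin k → Euc d) (ys ws : Fin l → Euc d) : Prop :=
  polyE xs vs ys ws ⊆ closure (interior (polyE xs vs ys ws))

/-- `{H_J}` is a generating set of Hamiltonians: each `H_J` is convex in `p`,
continuously differentiable on `E_J × ℝ^d` (with `p`-gradient `DpH J`), and the
`p`-gradient takes values in `Γ_J`. -/
def IsGenerating {d k l : ℕ} (xs vs : Fin k → Euc d) (ys ws : Fin l → Euc d)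
    (H : Finset (Fin k) → Euc d → Euc d → ℝ)
    (DpH : Finset (Fin k) → Euc d → Euc d → Euc d) : Prop :=
  ∀ J : Finset (Fin k),
    (∀ x ∈ polyEJ xs vs ys ws J, ConvexOn ℝ univ (H J x)) ∧
    ContDiffOn ℝ 1 (fun q : Euc d × Euc d => H J q.1 q.2)
      (polyEJ xs vs ys ws J ×ˢ univ) ∧
    (∀ x ∈ polyEJ xs vs ys ws J, ∀ p, HasGradientAt (fun p' => H J x p') (DpH J x p) p) ∧
    ContinuousOn (fun q : Euc d × Euc d => DpH J q.1 q.2)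
      (polyEJ xs vs ys ws J ×ˢ univ) ∧
    (∀ x ∈ polyEJ xs vs ys ws J, ∀ p, DpH J x p ∈ GammaJ vs J)

/-- The upper Hamiltonian `H_†(x,p) = max{H_J(x,p) : x ∈ E_J}`. -/
def Hdag {d k l : ℕ} (xs vs : Fin k → Euc d) (ys ws : Fin l → Euc d)
    (H : Finset (Fin k) → Euc d → Euc d → ℝ) (x p : Euc d) : ℝ :=
  sSup {r : ℝ | ∃ J : Finset (Fin k), x ∈ polyEJ xs vs ys ws J ∧ r = H J x p}

/-- The lower Hamiltonian `H_‡(x,p) = min{H_J(x,p) : x ∈ E_J}`. -/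
def Hddag {d k l : ℕ} (xs vs : Fin k → Euc d) (ys ws : Fin l → Euc d)
    (H : Finset (Fin k) → Euc d → Euc d → ℝ) (x p : Euc d) : ℝ :=
  sInf {r : ℝ | ∃ J : Finset (Fin k), x ∈ polyEJ xs vs ys ws J ∧ r = H J x p}

/-- `Υ` is a good containment function for the generating set `{H_J}`. -/
def GoodContainment {d k l : ℕ} (xs vs : Fin k → Euc d) (ys ws : Fin l → Euc d)
    (H : Finset (Fin k) → Euc d → Euc d → ℝ) (Υ : Euc d → ℝ) : Prop :=
  (∀ x ∈ polyE xs vs ys ws, 0 ≤ Υ x) ∧ (∃ x₀ ∈ polyE xs vs ys ws, Υ x₀ = 0) ∧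
  ContDiff ℝ 2 Υ ∧
  (∀ c : ℝ, 0 ≤ c → IsCompact {x ∈ polyE xs vs ys ws | Υ x ≤ c}) ∧
  ∃ C : ℝ, ∀ J : Finset (Fin k), ∀ z ∈ polyEJ xs vs ys ws J,
    H J z (gradient Υ z) ≤ C

/-- The Lagrangian `L_J(x,v) = sup_p (⟨p,v⟩ − H_J(x,p))`, with values in `[0,∞]`. -/
def LagJ {d k : ℕ} (H : Finset (Fin k) → Euc d → Euc d → ℝ)
    (J : Finset (Fin k)) (x w : Euc d) : ℝ≥0∞ :=
  ⨆ p : Euc d, ENNReal.ofReal ((inner ℝ (p) (w) : ℝ) - H J x p)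

/-- The Lagrangian `L(x,v) = sup_p (⟨p,v⟩ − H_†(x,p))`, with values in `[0,∞]`. -/
def Lag {d k l : ℕ} (xs vs : Fin k → Euc d) (ys ws : Fin l → Euc d)
    (H : Finset (Fin k) → Euc d → Euc d → ℝ) (x w : Euc d) : ℝ≥0∞ :=
  ⨆ p : Euc d, ENNReal.ofReal ((inner ℝ (p) (w) : ℝ) - Hdag xs vs ys ws H x p)

/-- The auxiliary Lagrangian `L̂(x,v)`, infimum over convex decompositions
`v = Σ λ_J v_J` (with `λ_J = 0` for `J` with `x ∉ E_J`) of `Σ λ_J L_J(x,v_J)`. -/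
def LagHat {d k l : ℕ} (xs vs : Fin k → Euc d) (ys ws : Fin l → Euc d)
    (H : Finset (Fin k) → Euc d → Euc d → ℝ) (x w : Euc d) : ℝ≥0∞ :=
  sInf {r : ℝ≥0∞ | ∃ (lam : Finset (Fin k) → ℝ) (wv : Finset (Fin k) → Euc d),
    (∀ J, 0 ≤ lam J) ∧ (∀ J, x ∉ polyEJ xs vs ys ws J → lam J = 0) ∧
    (∑ J : Finset (Fin k), lam J) = 1 ∧ (∑ J : Finset (Fin k), lam J • wv J) = w ∧
    r = ∑ J : Finset (Fin k), ENNReal.ofReal (lam J) * LagJ H J x (wv J)}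

/-! Bounding `H_†` on `K × B̄(0, n+1)` by `Mₙ` and testing the Lagrangian at `p = (n+1) v/‖v‖`
gives `(n+1)‖v‖ ≤ L(x,v) + Mₙ` for `x ∈ K`. Hence `‖v‖ ≤ ⨅ₙ (L(x,v) + Mₙ)/(n+1)`, a
nondecreasing Lipschitz function of `L(x,v)` of sublinear growth, and `ψ` is this bound times a
bound for `‖∇f‖` on `K`. -/

lemma mul_norm_le_of_forall_inner_le {E : Type*} [NormedAddCommGroup E]
    [InnerProductSpace ℝ E] {w : E} {s c : ℝ} (hs : 0 ≤ s)
    (h : ∀ p : E, ‖p‖ ≤ s → inner ℝ p w ≤ c) : s * ‖w‖ ≤ c := by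
  rcases eq_or_ne w 0 with rfl | hw
  · simpa using h 0 (by simpa using hs)
  have hw' : 0 < ‖w‖ := norm_pos_iff.2 hw
  calc s * ‖w‖ = inner ℝ ((s / ‖w‖) • w) w := by
        rw [real_inner_smul_left, real_inner_self_eq_norm_sq]; field_simp
    _ ≤ c := h _ <| by
        rw [norm_smul, Real.norm_of_nonneg (by positivity), div_mul_cancel₀ _ hw'.ne']

def sublinearModulus (M : ℕ → ℝ) (r : ℝ) : ℝ :=
  ⨅ n : ℕ, (max r 0 + M n) / (n + 1)

namespace sublinearModulus

variable {M : ℕ → ℝ}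

lemma term_nonneg (hM : ∀ n, 0 ≤ M n) (r : ℝ) (n : ℕ) : 0 ≤ (max r 0 + M n) / (n + 1) :=
  div_nonneg (add_nonneg (le_max_right r 0) (hM n)) n.cast_add_one_pos.le

lemma bddBelow (hM : ∀ n, 0 ≤ M n) (r : ℝ) :
    BddBelow (range fun n : ℕ => (max r 0 + M n) / (n + 1)) :=
  ⟨0, by rintro _ ⟨n, rfl⟩; exact term_nonneg hM r n⟩

lemma nonneg (hM : ∀ n, 0 ≤ M n) (r : ℝ) : 0 ≤ sublinearModulus M r :=
  le_ciInf (term_nonneg hM r)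

lemma le_term (hM : ∀ n, 0 ≤ M n) (r : ℝ) (n : ℕ) :
    sublinearModulus M r ≤ (max r 0 + M n) / (n + 1) :=
  ciInf_le (bddBelow hM r) n

lemma monotone (hM : ∀ n, 0 ≤ M n) : Monotone (sublinearModulus M) := fun r s hrs =>
  ciInf_mono (bddBelow hM r) fun n => by gcongr

lemma lipschitzWith_one (hM : ∀ n, 0 ≤ M n) : LipschitzWith 1 (sublinearModulus M) := by
  refine LipschitzWith.of_le_add fun r s => ?_
  rw [← sub_le_iff_le_add]
  refine le_ciInf fun n => ?_
  have hterm : (max r 0 - max s 0) / (n + 1) ≤ dist r s := by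
    have hmax : max r 0 - max s 0 ≤ dist r s :=
      (le_abs_self _).trans (abs_max_sub_max_le_abs r s 0)
    rw [div_le_iff₀ n.cast_add_one_pos]
    nlinarith [dist_nonneg (x := r) (y := s), n.cast_nonneg (α := ℝ)]
  calc sublinearModulus M r - dist r s
      ≤ (max r 0 + M n) / (n + 1) - (max r 0 - max s 0) / (n + 1) :=
        sub_le_sub (le_term hM r n) hterm
    _ = (max s 0 + M n) / (n + 1) := by ring

lemma tendsto_div_atTop (hM : ∀ n, 0 ≤ M n) :
    Tendsto (fun r => sublinearModulus M r / r) atTop (nhds 0) := by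
  refine tendsto_order.2 ⟨fun a ha => ?_, fun ε hε => ?_⟩
  · filter_upwards [eventually_ge_atTop 0] with r hr
    exact ha.trans_le (div_nonneg (nonneg hM r) hr)
  · obtain ⟨n, hn⟩ := exists_nat_gt (2 / ε)
    rw [div_lt_iff₀ hε] at hn
    filter_upwards [eventually_gt_atTop (max (M n) 0)] with r hr
    have hr0 : 0 < r := (le_max_right _ _).trans_lt hr
    have hMr : M n < r := (le_max_left _ _).trans_lt hr
    rw [div_lt_iff₀ hr0]
    calc sublinearModulus M r ≤ (max r 0 + M n) / (n + 1) := le_term hM r n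
      _ < 2 * r / (n + 1) := by rw [max_eq_left hr0.le]; gcongr; linarith
      _ ≤ ε * r := by
        rw [div_le_iff₀ n.cast_add_one_pos]
        nlinarith

lemma norm_le {E : Type*} [NormedAddCommGroup E] [InnerProductSpace ℝ E] {w : E} {r : ℝ}
    (hr : 0 ≤ r) (h : ∀ n : ℕ, ∀ p : E, ‖p‖ ≤ n + 1 → inner ℝ p w ≤ r + M n) :
    ‖w‖ ≤ sublinearModulus M r :=
  le_ciInf fun n => by
    rw [le_div_iff₀ n.cast_add_one_pos, mul_comm, max_eq_left hr]
    exact mul_norm_le_of_forall_inner_le n.cast_add_one_pos.le (h n)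

end sublinearModulus

lemma ContDiff.continuous_gradient {E : Type*} [NormedAddCommGroup E] [InnerProductSpace ℝ E]
    [CompleteSpace E] {f : E → ℝ} {n : WithTop ℕ∞} (hf : ContDiff ℝ n f) (hn : n ≠ 0) :
    Continuous (gradient f) :=
  (InnerProductSpace.toDual ℝ E).symm.continuous.comp (hf.continuous_fderiv hn)

section Hamiltonian

variable {d k l : ℕ} {xs vs : Fin k → Euc d} {ys ws : Fin l → Euc d}
  {H : Finset (Fin k) → Euc d → Euc d → ℝ}

lemma isCompact_inter_polyEJ {K : Set (Euc d)} (hKE : K ⊆ polyE xs vs ys ws) (hK : IsCompact K)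
    (J : Finset (Fin k)) : IsCompact (K ∩ polyEJ xs vs ys ws J) := by
  have hK_inter : K ∩ polyEJ xs vs ys ws J =
      K ∩ ⋂ i ∈ J, {z | inner ℝ (z - xs i) (vs i) = (0 : ℝ)} := by
    ext z
    simp only [polyEJ, mem_inter_iff, mem_ofPred_eq, mem_iInter]
    exact ⟨fun ⟨hz, _, h⟩ => ⟨hz, h⟩, fun ⟨hz, h⟩ => ⟨hz, hKE hz, h⟩⟩
  rw [hK_inter]
  exact hK.inter_right (isClosed_biInter fun i _ => isClosed_eq (by fun_prop) continuous_const)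

lemma Hdag_le_of_forall_le {x p : Euc d} {M : ℝ} (hx : x ∈ polyE xs vs ys ws)
    (h : ∀ J, x ∈ polyEJ xs vs ys ws J → H J x p ≤ M) : Hdag xs vs ys ws H x p ≤ M :=
  csSup_le ⟨_, ∅, ⟨hx, by simp⟩, rfl⟩ (by rintro _ ⟨J, hJ, rfl⟩; exact h J hJ)

lemma eventually_Hdag_le {DpH : Finset (Fin k) → Euc d → Euc d → Euc d}
    (hgen : IsGenerating xs vs ys ws H DpH) {K P : Set (Euc d)} (hKE : K ⊆ polyE xs vs ys ws)
    (hK : IsCompact K) (hP : IsCompact P) :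
    ∀ᶠ M in atTop, ∀ x ∈ K, ∀ p ∈ P, Hdag xs vs ys ws H x p ≤ M := by
  have hJ : ∀ J, ∀ᶠ M in atTop, ∀ x ∈ K ∩ polyEJ xs vs ys ws J, ∀ p ∈ P, H J x p ≤ M := by
    intro J
    obtain ⟨C, hC⟩ := ((isCompact_inter_polyEJ hKE hK J).prod hP).bddAbove_image
      ((hgen J).2.1.continuousOn.mono (prod_mono inter_subset_right (subset_univ P)))
    filter_upwards [eventually_ge_atTop C] with M hM x hx p hp
    exact (hC ⟨(x, p), ⟨hx, hp⟩, rfl⟩).trans hM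
  filter_upwards [eventually_all.2 hJ] with M hM x hx p hp
  exact Hdag_le_of_forall_le (hKE hx) fun J hxJ => hM J x ⟨hx, hxJ⟩ p hp

lemma inner_sub_Hdag_le_of_Lag_le {x w : Euc d} {r : ℝ} (hr : 0 ≤ r)
    (hL : Lag xs vs ys ws H x w ≤ ENNReal.ofReal r) (p : Euc d) :
    inner ℝ p w - Hdag xs vs ys ws H x p ≤ r :=
  (ENNReal.ofReal_le_ofReal_iff hr).1 <|
    (le_iSup (fun p => ENNReal.ofReal (inner ℝ p w - Hdag xs vs ys ws H x p)) p).trans hL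

end Hamiltonian

theorem sublinear_modulus_for_gradients_general {d k l : ℕ}
    (xs vs : Fin k → Euc d) (ys ws : Fin l → Euc d)
    (H : Finset (Fin k) → Euc d → Euc d → ℝ)
    (DpH : Finset (Fin k) → Euc d → Euc d → Euc d)
    (hgen : IsGenerating xs vs ys ws H DpH)
    (f : Euc d → ℝ) (hf : ContDiff ℝ 2 f)
    (K : Set (Euc d)) (hKE : K ⊆ polyE xs vs ys ws) (hK : IsCompact K) :
    ∃ ψ : ℝ → ℝ, (∀ r : ℝ, 0 ≤ r → 0 ≤ ψ r) ∧ MonotoneOn ψ (Ici 0) ∧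
      (∀ r : ℝ, 0 ≤ r → ContinuousWithinAt ψ (Ici r) r) ∧
      Tendsto (fun r => ψ r / r) atTop (nhds 0) ∧
      ∀ x ∈ K, ∀ w : Euc d, ∀ r : ℝ, 0 ≤ r →
        Lag xs vs ys ws H x w ≤ ENNReal.ofReal r →
        |(inner ℝ (gradient f x) w : ℝ)| ≤ ψ r := by
  obtain ⟨G, hG⟩ :=
    hK.exists_bound_of_continuousOn (hf.continuous_gradient two_ne_zero).continuousOn
  choose M hM hM0 using fun n : ℕ => ((eventually_Hdag_le hgen hKE hK
    (isCompact_closedBall (0 : Euc d) (n + 1))).and (eventually_ge_atTop 0)).exists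
  have hG0 : 0 ≤ max G 0 := le_max_right G 0
  refine ⟨fun r => max G 0 * sublinearModulus M r,
    fun r _ => mul_nonneg hG0 (sublinearModulus.nonneg hM0 r),
    ((sublinearModulus.monotone hM0).const_mul hG0).monotoneOn _,
    fun r _ => ((sublinearModulus.lipschitzWith_one hM0).continuous.const_mul _).continuousWithinAt,
    by simpa [mul_div_assoc] using (sublinearModulus.tendsto_div_atTop hM0).const_mul (max G 0),
    fun x hx w r hr hL => ?_⟩
  have hw : ‖w‖ ≤ sublinearModulus M r := sublinearModulus.norm_le hr fun n p hp => by
    linarith [inner_sub_Hdag_le_of_Lag_le hr hL p, hM n x hx p (mem_closedBall_zero_iff.2 hp)]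
  calc |inner ℝ (gradient f x) w| ≤ ‖gradient f x‖ * ‖w‖ := abs_real_inner_le_norm _ _
    _ ≤ max G 0 * sublinearModulus M r :=
      mul_le_mul ((hG x hx).trans (le_max_left G 0)) hw (norm_nonneg _) hG0

/-- Sublinear modulus for gradients against the Lagrangian (Proposition 4.15(c)):
for every bounded `C²` function `f` and every compact `K ⊆ E` there is a
right-continuous nondecreasing `ψ : [0,∞) → [0,∞)` with `ψ(r)/r → 0` such that
`|⟨∇f(x),v⟩| ≤ ψ(L(x,v))` for all `x ∈ K`, `v ∈ ℝ^d` (encoded as: the bound `ψ r`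
holds whenever `r` is a real upper bound for `L(x,v)`, the inequality being vacuous
when `L(x,v) = ∞`). -/
theorem sublinear_modulus_for_gradients {d k l : ℕ}
    (xs vs : Fin k → Euc d) (ys ws : Fin l → Euc d)
    (hpoly : IsPolyhedron xs vs ys ws)
    (H : Finset (Fin k) → Euc d → Euc d → ℝ)
    (DpH : Finset (Fin k) → Euc d → Euc d → Euc d)
    (hgen : IsGenerating xs vs ys ws H DpH)
    (Υ : Euc d → ℝ) (hΥ : GoodContainment xs vs ys ws H Υ)
    (f : Euc d → ℝ) (hf : ContDiff ℝ 2 f) (hfb : ∃ C, ∀ x, |f x| ≤ C)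
    (K : Set (Euc d)) (hKE : K ⊆ polyE xs vs ys ws) (hK : IsCompact K) :
    ∃ ψ : ℝ → ℝ, (∀ r : ℝ, 0 ≤ r → 0 ≤ ψ r) ∧ MonotoneOn ψ (Ici 0) ∧
      (∀ r : ℝ, 0 ≤ r → ContinuousWithinAt ψ (Ici r) r) ∧
      Tendsto (fun r => ψ r / r) atTop (nhds 0) ∧
      ∀ x ∈ K, ∀ w : Euc d, ∀ r : ℝ, 0 ≤ r →
        Lag xs vs ys ws H x w ≤ ENNReal.ofReal r →
        |(inner ℝ (gradient f x) w : ℝ)| ≤ ψ r :=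
  sublinear_modulus_for_gradients_general xs vs ys ws H DpH hgen f hf K hKE hK
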